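/- Let j ≥ 1 and let G be a graph whose vertex set partitions into D = {a,b,c,d,e} and a nonempty set R with |R| = j such that: the edges inside D are exactly ae, bc, bd, ce, de (so D induces the graph F_4, the complement of F_5); every vertex of R is adjacent to each of c, d, e and to neither a nor b; and the edges inside R are arbitrary. Then G is not L-integral. -/

import Mathlib

open SimpleGraph Polynomial

/-- A finite simple graph is `L`-integral if every eigenvalue of its Laplacian
matrix (over `ℝ`) is an integer. -/
def LIntegral {V : Type*} [Fintype V] [DecidableEq V] (G : SimpleGraph V)
    [DecidableRel G.Adj] : Prop :=
  ∀ μ ∈ spectrum ℝ (G.lapMatrix ℝ), ∃ z : ℤ, μ = (z : ℝ)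

/-- The graph obtained from `F₄` (vertices `a,b,c,d,e = 0,1,2,3,4`, edges
`ae, bc, bd, ce, de`; the complement of `F₅`) by adding a nonempty set `R` of
vertices, each adjacent exactly to `c`, `d` and `e`, with the edges inside `R`
given by `H`. -/
def F4Ext (j : ℕ) (H : SimpleGraph (Fin j)) : SimpleGraph (Fin 5 ⊕ Fin j) :=
  SimpleGraph.fromRel (fun u v =>
    (u = Sum.inl 0 ∧ v = Sum.inl 4) ∨ (u = Sum.inl 1 ∧ v = Sum.inl 2) ∨
    (u = Sum.inl 1 ∧ v = Sum.inl 3) ∨ (u = Sum.inl 2 ∧ v = Sum.inl 4) ∨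
    (u = Sum.inl 3 ∧ v = Sum.inl 4) ∨
    (∃ r : Fin j, (u = Sum.inl 2 ∨ u = Sum.inl 3 ∨ u = Sum.inl 4) ∧ v = Sum.inr r) ∨
    (∃ r s : Fin j, H.Adj r s ∧ u = Sum.inr r ∧ v = Sum.inr s))

/-!
Vectors that are constant on `R` form an invariant subspace of the Laplacian, on which it acts
by a matrix not depending on the edges inside `R` (an equitable partition). Restricting further
to vectors with equal entries at `c` and `d` leaves a `5 × 5` quotient matrix with characteristic
polynomial `t · Q_j(t)`, where `Q_j` is the quartic below. Since `Q_j(2) = -2 < 0 < 2j² + 4j = Q_j(3)`,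
`Q_j` has a root strictly between `2` and `3`, which is then a non-integral Laplacian eigenvalue.
-/

open Finset Matrix

namespace SimpleGraph.Iso

variable {V W R : Type*} [Fintype V] [Fintype W] [DecidableEq V] [DecidableEq W]
  {G : SimpleGraph V} {G' : SimpleGraph W} [DecidableRel G.Adj] [DecidableRel G'.Adj]

theorem reindex_lapMatrix [AddGroupWithOne R] (f : G ≃g G') :
    (G.lapMatrix R).reindex f f = G'.lapMatrix R := by
  rw [lapMatrix, lapMatrix, ← f.reindex_adjMatrix R]
  ext v w
  simp only [degMatrix, reindex_apply, submatrix_apply, Matrix.sub_apply, diagonal_apply,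
    EmbeddingLike.apply_eq_iff_eq, adjMatrix_apply, sub_left_inj]
  exact if_congr Iff.rfl (congrArg _ (f.symm.degree_eq v)) rfl

theorem spectrum_lapMatrix [CommRing R] (f : G ≃g G') :
    spectrum R (G'.lapMatrix R) = spectrum R (G.lapMatrix R) := by
  rw [← f.reindex_lapMatrix, ← coe_reindexAlgEquiv R R, AlgEquiv.spectrum_eq]

end SimpleGraph.Iso

theorem Matrix.mem_spectrum_of_mulVec_eq_smul {n K : Type*} [Fintype n] [DecidableEq n] [Field K]
    {M : Matrix n n K} {t : K} {x : n → K} (hx : x ≠ 0) (h : M *ᵥ x = t • x) :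
    t ∈ spectrum K M := by
  rw [← spectrum_toLin']
  exact (Module.End.hasEigenvalue_of_hasEigenvector
    ⟨Module.End.mem_eigenspace_iff.mpr (by simpa using h), hx⟩).mem_spectrum

theorem SimpleGraph.lapMatrix_mulVec_apply_eq_sum {V R : Type*} [Fintype V] [DecidableEq V]
    [NonAssocRing R] (G : SimpleGraph V) [DecidableRel G.Adj] (x : V → R) (v : V) :
    (G.lapMatrix R *ᵥ x) v = ∑ w, if G.Adj v w then x v - x w else 0 := by
  rw [lapMatrix_mulVec_apply, degree_eq_sum_if_adj, neighborFinset_eq_filter, sum_filter,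
    sum_mul, ← Finset.sum_sub_distrib]
  refine Finset.sum_congr rfl fun w _ => ?_
  split <;> simp

namespace F4Ext

variable {j : ℕ} {H : SimpleGraph (Fin j)}

theorem adj_inl_inl (i k : Fin 5) :
    (F4Ext j H).Adj (.inl i) (.inl k) ↔
      s(i, k) ∈ ({s(0, 4), s(1, 2), s(1, 3), s(2, 4), s(3, 4)} : Finset (Sym2 (Fin 5))) := by
  fin_cases i <;> fin_cases k <;> simp [F4Ext]

theorem adj_inl_inr (i : Fin 5) (r : Fin j) :
    (F4Ext j H).Adj (.inl i) (.inr r) ↔ 2 ≤ i := by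
  fin_cases i <;> simp [F4Ext]

theorem adj_inr_inl (r : Fin j) (i : Fin 5) :
    (F4Ext j H).Adj (.inr r) (.inl i) ↔ 2 ≤ i := by
  rw [adj_comm, adj_inl_inr]

theorem lapMatrix_mulVec_sumElim [DecidableRel (F4Ext j H).Adj] (x : Fin 5 → ℝ) (y : ℝ) :
    (F4Ext j H).lapMatrix ℝ *ᵥ Sum.elim x (fun _ => y) =
      Sum.elim ![x 0 - x 4, 2 * x 1 - x 2 - x 3, (2 + j) * x 2 - x 1 - x 4 - j * y,
        (2 + j) * x 3 - x 1 - x 4 - j * y, (3 + j) * x 4 - x 0 - x 2 - x 3 - j * y]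
        (fun _ => 3 * y - x 2 - x 3 - x 4) := by
  ext (i | r)
  · rw [lapMatrix_mulVec_apply_eq_sum, Fintype.sum_sum_type, Fin.sum_univ_five]
    fin_cases i <;>
      simp only [adj_inl_inl, adj_inl_inr, mem_insert, mem_singleton, Sym2.eq, Sym2.rel_iff',
        Prod.mk.injEq, Prod.swap_prod_mk, SimpleGraph.irrefl, Fin.isValue, Fin.reduceFinMk,
        Fin.mk_one, Fin.zero_eta, Fin.reduceEq, Fin.reduceLE, Std.le_refl, nonpos_iff_eq_zero,
        and_self, and_true, and_false, or_self, or_true, or_false, zero_ne_one, one_ne_zero,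
        ↓reduceIte, Sum.elim_inl, Sum.elim_inr, zero_add, add_zero, sum_const_zero,
        sum_sub_distrib, sum_const, card_univ, Fintype.card_fin, nsmul_eq_mul, Matrix.cons_val] <;>
      ring
  · rw [lapMatrix_mulVec_apply_eq_sum, Fintype.sum_sum_type, Fin.sum_univ_five]
    simp only [adj_inr_inl, Fin.isValue, Fin.reduceLE, Std.le_refl, nonpos_iff_eq_zero,
      Fin.reduceEq, ↓reduceIte, Sum.elim_inl, Sum.elim_inr, sub_self, ite_self, sum_const_zero,
      zero_add, add_zero]
    ring

def quartic (j t : ℝ) : ℝ :=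
  t ^ 4 - (2 * j + 11) * t ^ 3 + (j ^ 2 + 14 * j + 42) * t ^ 2 - (3 * j ^ 2 + 28 * j + 64) * t
    + (2 * j ^ 2 + 16 * j + 30)

theorem exists_quartic_eq_zero_mem_Ioo {j : ℝ} (hj : 0 < j) :
    ∃ t ∈ Set.Ioo (2 : ℝ) 3, quartic j t = 0 := by
  have hcont : ContinuousOn (quartic j) (Set.Icc 2 3) := by unfold quartic; fun_prop
  have h2 : quartic j 2 = -2 := by unfold quartic; ring
  have h3 : quartic j 3 = 2 * j ^ 2 + 4 * j := by unfold quartic; ring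
  refine intermediate_value_Ioo (by norm_num) hcont ?_
  rw [h2, h3]
  exact ⟨by norm_num, by positivity⟩

theorem mem_spectrum_lapMatrix_of_quartic_eq_zero [DecidableRel (F4Ext j H).Adj] {t : ℝ} (ht : t ∈ Set.Ioo 2 3)
    (hQ : quartic j t = 0) : t ∈ spectrum ℝ ((F4Ext j H).lapMatrix ℝ) := by
  obtain ⟨ht2, ht3⟩ := ht
  set α : ℝ := ((3 + j - t) * (3 - t) - j) * (1 - t) - (3 - t)
  set β : ℝ := 2 * (j + 3 - t) * (2 - t)
  -- The rows of `a`, `b` and `R` force this shape; `β` solves the `e`-row, and the `c`- and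
  -- `d`-rows then reduce to `Q_j(t) = 0`.
  refine mem_spectrum_of_mulVec_eq_smul (x := Sum.elim
    ![(3 - t) * β, 2 * (3 - t) * α, (2 - t) * (3 - t) * α, (2 - t) * (3 - t) * α,
      (1 - t) * (3 - t) * β] fun _ => 2 * (2 - t) * α + (1 - t) * β) ?_ ?_
  · have hx0 : (3 - t) * β ≠ 0 := by
      have hj0 : (0 : ℝ) ≤ j := j.cast_nonneg
      simp only [β]
      apply_rules [mul_ne_zero] <;> linarith
    exact fun h => hx0 (congrFun h (.inl 0))
  · rw [lapMatrix_mulVec_sumElim]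
    unfold quartic at hQ
    ext (i | r)
    · fin_cases i <;>
        simp only [Fin.isValue, Fin.reduceFinMk, Fin.mk_one, Fin.zero_eta, Matrix.cons_val,
          cons_val_zero, cons_val_one, Sum.elim_inl, Pi.smul_apply, smul_eq_mul, β, α]
      · ring
      · ring
      · linear_combination (t ^ 2 - 3 * t) * hQ
      · linear_combination (t ^ 2 - 3 * t) * hQ
      · ring
    · simp only [Fin.isValue, Matrix.cons_val, Sum.elim_inr, Pi.smul_apply, smul_eq_mul, β, α]
      ring

end F4Ext

/-- A graph consisting of `F₄` together with a nonempty set of extra vertices, each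
adjacent exactly to `c`, `d` and `e`, is not `L`-integral. -/
theorem F4Ext_not_LIntegral {V : Type*} [Fintype V] [DecidableEq V]
    (G : SimpleGraph V) [DecidableRel G.Adj] (j : ℕ) (hj : 1 ≤ j)
    (H : SimpleGraph (Fin j)) (h : Nonempty (G ≃g F4Ext j H)) :
    ¬ LIntegral G := by
  classical
  obtain ⟨f⟩ := h
  obtain ⟨t, ht, hQ⟩ := F4Ext.exists_quartic_eq_zero_mem_Ioo (Nat.cast_pos.mpr hj)
  have htG : t ∈ spectrum ℝ (G.lapMatrix ℝ) := by
    rw [← f.spectrum_lapMatrix]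
    exact F4Ext.mem_spectrum_lapMatrix_of_quartic_eq_zero ht hQ
  intro hG
  obtain ⟨z, rfl⟩ := hG t htG
  have hz : (2 : ℤ) < z ∧ z < 3 := ⟨by exact_mod_cast ht.1, by exact_mod_cast ht.2⟩
  omega
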